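/- Let q be a power of a prime p, and let a ∈ F_{q^2}^* with a^{q+1} = 1 and a ≠ 1, and let c ∈ F_{q^2} with c ≠ 0 and c^q + c = 0. Let H = {(x, y) ∈ F_{q^2} × F_{q^2} : y^q + y = x^{q+1}} and let Ω = {(0, y) ∈ H} = {(0, y) : y^q + y = 0} (a set of q points). Then the map ψ(x, y) = (a x, y + c) is a bijection of H onto itself of order p · ord(a), where ord(a) is the multiplicative order of a; every point of Ω has ψ-orbit of cardinality exactly p, giving q/p short orbits; and every point of H with x ≠ 0 has ψ-orbit of cardinality exactly p · ord(a). -/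

import Mathlib

/-!
Iterating gives `ψ^k (x, y) = (a^k x, y + k c)`. In characteristic `p` with `c ≠ 0` this fixes
`(x, y)` iff `p ∣ k` and `a^k x = x`, so points with `x = 0` have minimal period `p` and the
others `lcm(p, ord a) = p · ord a`, because `ord a ∣ q + 1` is prime to `p`. Since
`ψ^(p · ord a) = id`, orbits are sets of iterates and have the minimal period as cardinality.
The set `Ω` is the kernel of the additive map `y ↦ y^q + y`, whose image lies in
`{z | z^q = z}`; kernel and image both consist of roots of polynomials of degree `q` and their
sizes multiply to `q^2`, so `|Ω| = q`. Finally `Ω` is `ψ`-invariant and cut into orbits of size `p`.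
-/

/-- The orbit of a point `P` under a bijection `f`, i.e. `{f^k(P) : k ∈ ℤ}`
(for an injective `f`, `Q` lies in the orbit of `P` iff some forward iterates agree). -/
def fnOrbit {α : Type*} (f : α → α) (P : α) : Set α :=
  {Q | ∃ j k : ℕ, f^[j] P = f^[k] Q}

def IsOrderOf {α : Type*} (f : α → α) (n : ℕ) : Prop :=
  f^[n] = id ∧ ∀ k : ℕ, 0 < k → f^[k] = id → n ≤ k

open Function Set

section Orbits

variable {α : Type*} {f : α → α}

lemma mem_fnOrbit_self (f : α → α) (P : α) : P ∈ fnOrbit f P := ⟨0, 0, rfl⟩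

lemma fnOrbit_symm {P Q : α} (h : Q ∈ fnOrbit f P) : P ∈ fnOrbit f Q :=
  let ⟨j, k, h⟩ := h
  ⟨k, j, h.symm⟩

lemma fnOrbit_trans {P Q R : α} (hQ : Q ∈ fnOrbit f P) (hR : R ∈ fnOrbit f Q) :
    R ∈ fnOrbit f P := by
  obtain ⟨j, k, hQ⟩ := hQ
  obtain ⟨j', k', hR⟩ := hR
  refine ⟨j' + j, k + k', ?_⟩
  rw [iterate_add_apply, hQ, ← iterate_add_apply, add_comm, iterate_add_apply, hR,
    ← iterate_add_apply]

lemma fnOrbit_eq_iff_mem {P Q : α} : fnOrbit f Q = fnOrbit f P ↔ Q ∈ fnOrbit f P :=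
  ⟨fun h => h ▸ mem_fnOrbit_self f Q, fun h => Set.ext fun _ =>
    ⟨fnOrbit_trans h, fnOrbit_trans (fnOrbit_symm h)⟩⟩

lemma fnOrbit_eq_range_iterate {N : ℕ} (hN : 0 < N) (hf : f^[N] = id) (P : α) :
    fnOrbit f P = range (f^[·] P) := by
  ext Q
  constructor
  · rintro ⟨j, k, h⟩
    have hQ : f^[N * k] Q = Q := by rw [iterate_mul, hf, iterate_id, id]
    refine ⟨(N - 1) * k + j, ?_⟩
    change f^[_] P = Q
    rw [iterate_add_apply, h, ← iterate_add_apply, ← add_one_mul, Nat.sub_one_add_one hN.ne',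
      hQ]
  · rintro ⟨m, rfl⟩
    exact ⟨m, 0, rfl⟩

lemma ncard_fnOrbit {N : ℕ} (hN : 0 < N) (hf : f^[N] = id) (P : α) :
    (fnOrbit f P).ncard = minimalPeriod f P := by
  have hpos : 0 < minimalPeriod f P := IsPeriodicPt.minimalPeriod_pos hN (congrFun hf P)
  have himage : fnOrbit f P = (f^[·] P) '' Iio (minimalPeriod f P) := by
    rw [fnOrbit_eq_range_iterate hN hf]
    ext Q
    constructor
    · rintro ⟨m, rfl⟩
      exact ⟨m % minimalPeriod f P, Nat.mod_lt _ hpos, iterate_mod_minimalPeriod_eq⟩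
    · rintro ⟨m, -, rfl⟩
      exact ⟨m, rfl⟩
  rw [himage, iterate_injOn_Iio_minimalPeriod.ncard_image, ← Finset.coe_Iio,
    ncard_coe_finset, Nat.card_Iio]

lemma minimalPeriod_eq_of_isPeriodicPt_iff {x : α} {d : ℕ}
    (h : ∀ k, IsPeriodicPt f k x ↔ d ∣ k) : minimalPeriod f x = d :=
  Nat.dvd_antisymm (isPeriodicPt_iff_minimalPeriod_dvd.mp ((h d).mpr dvd_rfl))
    ((h _).mp (isPeriodicPt_minimalPeriod f x))

lemma isOrderOf_of_minimalPeriod_eq {n : ℕ} {x : α} (hf : f^[n] = id)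
    (hx : minimalPeriod f x = n) : IsOrderOf f n :=
  ⟨hf, fun _ hk hk' => hx ▸ IsPeriodicPt.minimalPeriod_le hk (congrFun hk' x)⟩

lemma Set.MapsTo.bijOn_of_iterate_eq_id {s : Set α} {N : ℕ} (hs : MapsTo f s s) (hN : 0 < N)
    (hf : f^[N] = id) : BijOn f s s := by
  have hN' : N - 1 + 1 = N := Nat.sub_one_add_one hN.ne'
  have hinv : InvOn f^[N - 1] f s s :=
    ⟨fun x _ => by rw [← iterate_succ_apply, Nat.succ_eq_add_one, hN', hf, id],
     fun x _ => by rw [← iterate_succ_apply' f, Nat.succ_eq_add_one, hN', hf, id]⟩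
  exact hinv.bijOn hs (hs.iterate _)

lemma ncard_image_mul_eq_ncard {β : Type*} {s : Set α} (hs : s.Finite) (g : α → β) {d : ℕ}
    (hfiber : ∀ x ∈ s, {y ∈ s | g y = g x}.ncard = d) : (g '' s).ncard * d = s.ncard := by
  classical
  lift s to Finset α using hs
  rw [← Finset.coe_image, ncard_coe_finset, ncard_coe_finset, Finset.card_eq_sum_card_image g s,
    Finset.sum_congr rfl (g := fun _ => d), Finset.sum_const, smul_eq_mul]
  rintro _ hb
  obtain ⟨x, hx, rfl⟩ := Finset.mem_image.mp hb
  rw [← hfiber x hx, ← ncard_coe_finset, Finset.coe_filter]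
  rfl

lemma ncard_fnOrbits_mul_eq_ncard {s : Set α} (hs : s.Finite)
    (hfs : MapsTo f s s) {N : ℕ} (hN : 0 < N) (hf : f^[N] = id) {d : ℕ}
    (hd : ∀ P ∈ s, minimalPeriod f P = d) :
    {O : Set α | ∃ P ∈ s, O = fnOrbit f P}.ncard * d = s.ncard := by
  have horbits : {O : Set α | ∃ P ∈ s, O = fnOrbit f P} = fnOrbit f '' s := by
    simp only [image, eq_comm]
  rw [horbits]
  refine ncard_image_mul_eq_ncard hs _ fun P hP => ?_
  have hsub : fnOrbit f P ⊆ s := by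
    rw [fnOrbit_eq_range_iterate hN hf]
    rintro _ ⟨m, rfl⟩
    exact hfs.iterate m hP
  simp_rw [fnOrbit_eq_iff_mem, sep_mem_eq, inter_eq_right.mpr hsub]
  exact (ncard_fnOrbit hN hf P).trans (hd P hP)

end Orbits

section RootCount

variable {K : Type*} [Field K]

open Polynomial in
lemma ncard_setOf_pow_eq_mul_le {q : ℕ} (hq : 1 < q) (b : K) :
    {y : K | y ^ q = b * y}.ncard ≤ q := by
  classical
  set g : K[X] := X ^ q - C b * X
  have hg : g.natDegree = q := by
    rw [natDegree_sub_eq_left_of_natDegree_lt] <;> simp only [natDegree_X_pow]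
    exact (natDegree_C_mul_le b X).trans_lt (by simpa using hq)
  have hg0 : g ≠ 0 := fun h => by simp [h] at hg; omega
  have hsub : {y : K | y ^ q = b * y} ⊆ g.roots.toFinset := fun y hy => by
    simp [mem_roots hg0, g, hy.out]
  calc {y : K | y ^ q = b * y}.ncard ≤ (g.roots.toFinset : Set K).ncard :=
        ncard_le_ncard hsub (Finset.finite_toSet _)
    _ ≤ Multiset.card g.roots := by rw [ncard_coe_finset]; exact Multiset.toFinset_card_le _
    _ ≤ q := hg ▸ card_roots' g

lemma ncard_setOf_pow_add_self_eq_zero [Fintype K] (p : ℕ) [ExpChar K p] {n q : ℕ}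
    (hq : q = p ^ n) (hq1 : 1 < q) (hK : Fintype.card K = q ^ 2) :
    {y : K | y ^ q + y = 0}.ncard = q := by
  let φ : K →+ K := (iterateFrobenius K p n : K →+* K).toAddMonoidHom + AddMonoidHom.id K
  have hφ (y : K) : φ y = y ^ q + y := by simp [φ, iterateFrobenius_def, hq]
  have hker : (φ.ker : Set K) = {y : K | y ^ q + y = 0} := by ext y; simp [hφ]
  have hrange : (φ.range : Set K) ⊆ {z : K | z ^ q = 1 * z} := by
    rintro _ ⟨y, rfl⟩
    have hyq : y ^ q ^ 2 = y := hK ▸ FiniteField.pow_card y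
    simp only [mem_ofPred_eq, hφ, one_mul, hq] at hyq ⊢
    rw [add_pow_expChar_pow, ← pow_mul, ← pow_two, hyq, add_comm]
  have hcard (S : AddSubgroup K) : Nat.card S = (S : Set K).ncard := Nat.card_coe_set_eq _
  have hker_le : (φ.ker : Set K).ncard ≤ q := by
    rw [hker]
    simpa [add_eq_zero_iff_eq_neg] using ncard_setOf_pow_eq_mul_le hq1 (-1 : K)
  have hrange_le : (φ.range : Set K).ncard ≤ q :=
    (ncard_le_ncard hrange (toFinite _)).trans (ncard_setOf_pow_eq_mul_le hq1 1)
  have hprod : (φ.ker : Set K).ncard * (φ.range : Set K).ncard = q ^ 2 := by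
    rw [← hcard, ← hcard, ← AddSubgroup.index_ker, AddSubgroup.card_mul_index,
      Nat.card_eq_fintype_card, hK]
  rw [← hker]
  nlinarith

end RootCount

lemma Nat.Prime.coprime_orderOf_of_pow_succ_eq_one {M : Type*} [Monoid M] {a : M} {p q : ℕ}
    (hp : p.Prime) (hpq : p ∣ q) (ha : a ^ (q + 1) = 1) : p.Coprime (orderOf a) :=
  hp.coprime_iff_not_dvd.mpr fun h => hp.one_lt.ne' <|
    Nat.dvd_one.mp ((Nat.dvd_add_right hpq).mp (h.trans (orderOf_dvd_of_pow_eq_one ha)))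

section ScaleTranslate

def scaleTranslate {R : Type*} [Semiring R] (a c : R) (P : R × R) : R × R := (a * P.1, P.2 + c)

lemma scaleTranslate_iterate {R : Type*} [Semiring R] (a c : R) (k : ℕ) (P : R × R) :
    (scaleTranslate a c)^[k] P = (a ^ k * P.1, P.2 + k • c) := by
  induction k with
  | zero => simp
  | succ k ih =>
    rw [iterate_succ_apply', ih]
    simp only [scaleTranslate, pow_succ', mul_assoc, succ_nsmul, add_assoc]

lemma isPeriodicPt_scaleTranslate_iff {R : Type*} [Ring R] {a c : R} {k : ℕ} {P : R × R} :
    IsPeriodicPt (scaleTranslate a c) k P ↔ a ^ k * P.1 = P.1 ∧ k • c = 0 := by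
  simp [IsPeriodicPt, IsFixedPt, scaleTranslate_iterate, Prod.ext_iff]

variable {K : Type*} [Field K] (p : ℕ) [CharP K p] {a c : K}

lemma nsmul_eq_zero_iff_charP_dvd (hc : c ≠ 0) (k : ℕ) : k • c = 0 ↔ p ∣ k := by
  rw [nsmul_eq_mul, mul_eq_zero, CharP.cast_eq_zero_iff K p, or_iff_left hc]

lemma minimalPeriod_scaleTranslate_of_fst_eq_zero (hc : c ≠ 0) {P : K × K} (hP : P.1 = 0) :
    minimalPeriod (scaleTranslate a c) P = p :=
  minimalPeriod_eq_of_isPeriodicPt_iff fun k => by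
    rw [isPeriodicPt_scaleTranslate_iff, hP, mul_zero, nsmul_eq_zero_iff_charP_dvd p hc,
      eq_self_iff_true, true_and]

lemma minimalPeriod_scaleTranslate_of_fst_ne_zero (hc : c ≠ 0) {P : K × K} (hP : P.1 ≠ 0) :
    minimalPeriod (scaleTranslate a c) P = Nat.lcm p (orderOf a) :=
  minimalPeriod_eq_of_isPeriodicPt_iff fun k => by
    rw [isPeriodicPt_scaleTranslate_iff, mul_eq_right₀ hP, ← orderOf_dvd_iff_pow_eq_one,
      nsmul_eq_zero_iff_charP_dvd p hc, Nat.lcm_dvd_iff, and_comm]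

lemma iterate_scaleTranslate_lcm : (scaleTranslate a c)^[Nat.lcm p (orderOf a)] = id :=
  funext fun _ => isPeriodicPt_scaleTranslate_iff.mpr
    ⟨by rw [orderOf_dvd_iff_pow_eq_one.mp (Nat.dvd_lcm_right _ _), one_mul],
     by rw [nsmul_eq_mul, (CharP.cast_eq_zero_iff K p _).mpr (Nat.dvd_lcm_left _ _), zero_mul]⟩

variable [Fact p.Prime] {n q : ℕ}

lemma scaleTranslate_snd_pow_add (hq : q = p ^ n) (hc : c ^ q + c = 0) (P : K × K) :
    (scaleTranslate a c P).2 ^ q + (scaleTranslate a c P).2 = P.2 ^ q + P.2 := by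
  rw [scaleTranslate, hq, add_pow_char_pow, ← hq]
  linear_combination hc

lemma mapsTo_scaleTranslate_hermitian (hq : q = p ^ n) (ha : a ^ (q + 1) = 1)
    (hc : c ^ q + c = 0) :
    MapsTo (scaleTranslate a c) {P | P.2 ^ q + P.2 = P.1 ^ (q + 1)}
      {P | P.2 ^ q + P.2 = P.1 ^ (q + 1)} := fun P hP => by
  rw [mem_ofPred_eq, scaleTranslate_snd_pow_add p hq hc, hP]
  simp [scaleTranslate, mul_pow, ha]

lemma mapsTo_scaleTranslate_trace_kernel (hq : q = p ^ n) (hc : c ^ q + c = 0) :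
    MapsTo (scaleTranslate a c) {P | P.1 = 0 ∧ P.2 ^ q + P.2 = 0}
      {P | P.1 = 0 ∧ P.2 ^ q + P.2 = 0} := fun P hP =>
  ⟨by simp [scaleTranslate, hP.1], (scaleTranslate_snd_pow_add p hq hc P).trans hP.2⟩

end ScaleTranslate

theorem stmt15_general (p nn q : ℕ) (hp : p.Prime) (hq : q = p ^ nn) (hn : 1 ≤ nn)
    {F : Type*} [Field F] [Fintype F] (hF : Fintype.card F = q ^ 2)
    (a : F) (haq : a ^ (q + 1) = 1)
    (c : F) (hc0 : c ≠ 0) (hc : c ^ q + c = 0)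
    (H : Set (F × F)) (hH : H = {P : F × F | P.2 ^ q + P.2 = P.1 ^ (q + 1)})
    (Ω : Set (F × F)) (hΩ : Ω = {P : F × F | P.1 = 0 ∧ P.2 ^ q + P.2 = 0})
    (ψ : F × F → F × F) (hψ : ψ = fun P => (a * P.1, P.2 + c)) :
    Ω.ncard = q ∧
    Set.BijOn ψ H H ∧
    IsOrderOf ψ (p * orderOf a) ∧
    (∀ P ∈ Ω, (fnOrbit ψ P).ncard = p) ∧
    {O : Set (F × F) | ∃ P ∈ Ω, O = fnOrbit ψ P}.ncard = q / p ∧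
    ∀ P ∈ H, P.1 ≠ 0 → (fnOrbit ψ P).ncard = p * orderOf a := by
  obtain rfl : ψ = scaleTranslate a c := hψ
  subst hH hΩ
  have : Fact p.Prime := ⟨hp⟩
  have : CharP F p := charP_of_card_eq_prime_pow (f := nn * 2) (by rw [hF, hq, pow_mul])
  have hcop : p.Coprime (orderOf a) :=
    hp.coprime_orderOf_of_pow_succ_eq_one (hq ▸ dvd_pow_self p (by omega)) haq
  have hN : 0 < p * orderOf a := Nat.mul_pos hp.pos
    (Nat.pos_of_dvd_of_pos (orderOf_dvd_of_pow_eq_one haq) q.succ_pos)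
  have hψN : (scaleTranslate a c)^[p * orderOf a] = id :=
    hcop.lcm_eq_mul ▸ iterate_scaleTranslate_lcm p
  have hperiod : ∀ P ∈ {P : F × F | P.1 = 0 ∧ P.2 ^ q + P.2 = 0},
      minimalPeriod (scaleTranslate a c) P = p :=
    fun P hP => minimalPeriod_scaleTranslate_of_fst_eq_zero p hc0 hP.1
  have hΩcard : {P : F × F | P.1 = 0 ∧ P.2 ^ q + P.2 = 0}.ncard = q := by
    have hΩ : {P : F × F | P.1 = 0 ∧ P.2 ^ q + P.2 = 0} = Prod.mk 0 '' {y | y ^ q + y = 0} := by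
      ext ⟨x, y⟩
      simp [eq_comm, and_comm]
    rw [hΩ, ncard_image_of_injective _ (Prod.mk_right_injective 0),
      ncard_setOf_pow_add_self_eq_zero p hq (hq ▸ Nat.one_lt_pow (by omega) hp.one_lt) hF]
  have hperiod_ne : ∀ P : F × F, P.1 ≠ 0 →
      minimalPeriod (scaleTranslate a c) P = p * orderOf a :=
    fun P hP => by rw [minimalPeriod_scaleTranslate_of_fst_ne_zero p hc0 hP, hcop.lcm_eq_mul]
  have hcount := ncard_fnOrbits_mul_eq_ncard (toFinite _)
    (mapsTo_scaleTranslate_trace_kernel p hq hc) hN hψN hperiod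
  exact ⟨hΩcard, (mapsTo_scaleTranslate_hermitian p hq haq hc).bijOn_of_iterate_eq_id hN hψN,
    isOrderOf_of_minimalPeriod_eq hψN (hperiod_ne (1, 0) one_ne_zero),
    fun P hP => (ncard_fnOrbit hN hψN P).trans (hperiod P hP),
    (Nat.div_eq_of_eq_mul_left hp.pos (hcount.trans hΩcard).symm).symm,
    fun P _ hP => (ncard_fnOrbit hN hψN P).trans (hperiod_ne P hP)⟩

theorem stmt15 (p nn q : ℕ) (hp : p.Prime) (hq : q = p ^ nn) (hn : 1 ≤ nn)
    {F : Type*} [Field F] [Fintype F] (hF : Fintype.card F = q ^ 2)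
    (a : F) (ha0 : a ≠ 0) (haq : a ^ (q + 1) = 1) (ha1 : a ≠ 1)
    (c : F) (hc0 : c ≠ 0) (hc : c ^ q + c = 0)
    (H : Set (F × F)) (hH : H = {P : F × F | P.2 ^ q + P.2 = P.1 ^ (q + 1)})
    (Ω : Set (F × F)) (hΩ : Ω = {P : F × F | P.1 = 0 ∧ P.2 ^ q + P.2 = 0})
    (ψ : F × F → F × F) (hψ : ψ = fun P => (a * P.1, P.2 + c)) :
    Ω.ncard = q ∧
    Set.BijOn ψ H H ∧
    IsOrderOf ψ (p * orderOf a) ∧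
    (∀ P ∈ Ω, (fnOrbit ψ P).ncard = p) ∧
    {O : Set (F × F) | ∃ P ∈ Ω, O = fnOrbit ψ P}.ncard = q / p ∧
    ∀ P ∈ H, P.1 ≠ 0 → (fnOrbit ψ P).ncard = p * orderOf a :=
  stmt15_general p nn q hp hq hn hF a haq c hc0 hc H hH Ω hΩ ψ hψ
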